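/- Let N ∈ ℕ, let (l₁, μ₁), …, (l_N, μ_N) be pairwise distinct pairs in ℤ × (0,∞), let a₁, …, a_N be complex numbers, and define f(θ,t) = Σ_{k=1}^N a_k·e^{i l_k θ}·cos(μ_k t)/√(2π) on S¹ × [0,∞). Then the limit as A → ∞ of (2/A)·∫₀^A ∫₀^{2π} |f(θ,t)|² dθ dt exists and equals Σ_{k=1}^N |a_k|². -/

import Mathlib

open Filter

section Aux

lemma sin_two_pi_int' (n : ℤ) : Real.sin ((n:ℝ)*(2*Real.pi)) = 0 := by
  rw [show (n:ℝ)*(2*Real.pi) = ((2*n:ℤ):ℝ)*Real.pi by push_cast; ring, Real.sin_int_mul_pi]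

lemma int_cos_int (n : ℤ) :
    ∫ θ in (0:ℝ)..(2*Real.pi), Real.cos (n*θ) = if n = 0 then 2*Real.pi else 0 := by
  rcases eq_or_ne n 0 with h | h
  · simp [h]
  · have hn : (n:ℝ) ≠ 0 := Int.cast_ne_zero.2 h
    rw [if_neg h, intervalIntegral.integral_comp_mul_left Real.cos hn]
    simp [sin_two_pi_int' n]

lemma int_sin_int (n : ℤ) : ∫ θ in (0:ℝ)..(2*Real.pi), Real.sin (n*θ) = 0 := by
  rcases eq_or_ne n 0 with h | h
  · simp [h]
  · have hn : (n:ℝ) ≠ 0 := Int.cast_ne_zero.2 h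
    rw [intervalIntegral.integral_comp_mul_left Real.sin hn]
    have : (n:ℝ) * (2*Real.pi) = (n : ℤ) * (2*Real.pi) := by norm_num
    simp [this, Real.cos_int_mul_two_pi]

lemma int_cos_c {c : ℝ} (hc : c ≠ 0) (A : ℝ) :
    ∫ t in (0:ℝ)..A, Real.cos (c*t) = Real.sin (c*A)/c := by
  rw [intervalIntegral.integral_comp_mul_left Real.cos hc]
  simp [div_eq_inv_mul]

lemma tendsto_bdd_div (g : ℝ → ℝ) (C : ℝ) (hb : ∀ A, |g A| ≤ C) :
    Tendsto (fun A => g A / A) atTop (nhds 0) := by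
  apply squeeze_zero_norm' (a := fun A : ℝ => C / A)
  · filter_upwards [eventually_gt_atTop (0:ℝ)] with A hA
    rw [Real.norm_eq_abs, abs_div, abs_of_pos hA]
    gcongr
    exact hb A
  · simpa using tendsto_const_nhds.div_atTop tendsto_id

lemma tendsto_cos_cos {μ ν : ℝ} (hμ : 0 < μ) (hν : 0 < ν) :
    Tendsto (fun A => (2/A) * ∫ t in (0:ℝ)..A, Real.cos (μ*t) * Real.cos (ν*t))
      atTop (nhds (if μ = ν then 1 else 0)) := by
  have key : ∀ A, ∫ t in (0:ℝ)..A, Real.cos (μ*t) * Real.cos (ν*t)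
      = ((if μ = ν then A else Real.sin ((μ-ν)*A)/(μ-ν)) + Real.sin ((μ+ν)*A)/(μ+ν)) / 2 := by
    intro A
    have hμν : μ + ν ≠ 0 := by positivity
    have heq : ∀ t : ℝ, Real.cos (μ*t) * Real.cos (ν*t)
        = (Real.cos ((μ-ν)*t) + Real.cos ((μ+ν)*t)) / 2 := by
      intro t
      rw [show (μ-ν)*t = μ*t - ν*t by ring, show (μ+ν)*t = μ*t + ν*t by ring,
        Real.cos_sub, Real.cos_add]
      ring
    rw [intervalIntegral.integral_congr
      (g := fun t => (Real.cos ((μ-ν)*t) + Real.cos ((μ+ν)*t)) / 2) (fun t _ => heq t)]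
    have h1 : IntervalIntegrable (fun t => Real.cos ((μ-ν)*t)) MeasureTheory.volume 0 A :=
      (Real.continuous_cos.comp (continuous_const.mul continuous_id)).intervalIntegrable _ _
    have h2 : IntervalIntegrable (fun t => Real.cos ((μ+ν)*t)) MeasureTheory.volume 0 A :=
      (Real.continuous_cos.comp (continuous_const.mul continuous_id)).intervalIntegrable _ _
    rw [intervalIntegral.integral_div, intervalIntegral.integral_add h1 h2, int_cos_c hμν]
    rcases eq_or_ne μ ν with h | h
    · simp [h, sub_self]
    · rw [if_neg h, int_cos_c (sub_ne_zero.2 h)]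
  simp only [key]
  have cancel : ∀ A x : ℝ, (2/A)*(x/2) = x/A := by
    intro A x
    rw [div_mul_div_comm, mul_comm (2:ℝ) x, mul_div_mul_right x A two_ne_zero]
  have habs : ∀ x : ℝ, |Real.sin x| ≤ 1 := fun x => Real.abs_sin_le_one x
  rcases eq_or_ne μ ν with h | h
  · subst h
    simp only [if_pos rfl, add_div, mul_add, cancel]
    have h1 : Tendsto (fun A : ℝ => A / A) atTop (nhds 1) := by
      apply Tendsto.congr' _ tendsto_const_nhds
      filter_upwards [eventually_gt_atTop (0:ℝ)] with A hA
      rw [div_self hA.ne']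
    have h2 : Tendsto (fun A : ℝ => (Real.sin ((μ+μ)*A)/(μ+μ)) / A) atTop (nhds 0) :=
      tendsto_bdd_div _ (1/(μ+μ)) (fun A => by
        rw [abs_div, abs_of_pos (by positivity : (0:ℝ) < μ+μ)]
        gcongr
        exact habs _)
    simpa using h1.add h2
  · simp only [if_neg h, cancel]
    refine tendsto_bdd_div _ (1/|μ-ν| + 1/(μ+ν)) (fun A => (abs_add_le _ _).trans (add_le_add ?_ ?_))
    · rw [abs_div]
      gcongr
      exact habs _
    · rw [abs_div, abs_of_pos (by positivity : (0:ℝ) < μ+ν)]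
      gcongr
      exact habs _

lemma prod_term (aj ak : ℂ) (lj lk : ℤ) (θ cj ck s : ℝ) (hs : s * s = 2*Real.pi) :
    (aj * Complex.exp (Complex.I * lj * θ) * ↑cj / ↑s) *
      (starRingEnd ℂ) (ak * Complex.exp (Complex.I * lk * θ) * ↑ck / ↑s)
    = (aj * (starRingEnd ℂ) ak * Complex.exp (↑(((lj - lk : ℤ):ℝ)*θ) * Complex.I))
        * ↑cj * ↑ck / ↑(2*Real.pi) := by
  have harg : (starRingEnd ℂ) (Complex.I * lk * θ) = -(Complex.I * lk * θ) := by
    simp [map_mul, Complex.conj_ofReal]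
  have hconj : (starRingEnd ℂ) (ak * Complex.exp (Complex.I * lk * θ) * ↑ck / ↑s)
      = (starRingEnd ℂ) ak * Complex.exp (-(Complex.I * lk * θ)) * ↑ck / ↑s := by
    rw [map_div₀, map_mul, map_mul, ← Complex.exp_conj, harg, Complex.conj_ofReal,
      Complex.conj_ofReal]
  have hexp : Complex.exp (Complex.I * lj * θ) * Complex.exp (-(Complex.I * lk * θ))
      = Complex.exp (↑(((lj - lk : ℤ):ℝ)*θ) * Complex.I) := by
    rw [← Complex.exp_add]; congr 1; push_cast; ring
  have hss : (s:ℂ) * (s:ℂ) = ((2*Real.pi : ℝ) : ℂ) := by norm_cast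
  rw [hconj]
  calc (aj * Complex.exp (Complex.I * lj * θ) * ↑cj / ↑s) *
        ((starRingEnd ℂ) ak * Complex.exp (-(Complex.I * lk * θ)) * ↑ck / ↑s)
      = (aj * (starRingEnd ℂ) ak *
          (Complex.exp (Complex.I * lj * θ) * Complex.exp (-(Complex.I * lk * θ))))
          * ↑cj * ↑ck / ((s:ℂ) * (s:ℂ)) := by ring
    _ = _ := by rw [hexp, hss]

end Aux

/-- Parseval-type identity: for pairwise distinct pairs `(l_k, μ_k) ∈ ℤ × (0,∞)` and
`f(θ,t) = Σ_k a_k e^{i l_k θ} cos(μ_k t)/√(2π)`, the limit as `A → ∞` of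
`(2/A) ∫₀^A ∫₀^{2π} |f(θ,t)|² dθ dt` exists and equals `Σ_k |a_k|²`. -/
theorem statement5 (N : ℕ) (l : Fin N → ℤ) (μ : Fin N → ℝ) (hpos : ∀ k, 0 < μ k)
    (hinj : Function.Injective (fun k => (l k, μ k))) (a : Fin N → ℂ) :
    Tendsto (fun A : ℝ => (2 / A) *
        ∫ t in (0:ℝ)..A, ∫ θ in (0:ℝ)..(2 * Real.pi),
          ‖∑ k, a k * Complex.exp (Complex.I * (l k : ℂ) * (θ : ℂ)) *
              (Real.cos (μ k * t) : ℂ) / (Real.sqrt (2 * Real.pi) : ℂ)‖ ^ 2)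
      atTop (nhds (∑ k, ‖a k‖ ^ 2)) := by
  have hs : Real.sqrt (2*Real.pi) * Real.sqrt (2*Real.pi) = 2*Real.pi :=
    Real.mul_self_sqrt (by positivity)
  have hnorm : ∀ z : ℂ, ‖z‖^2 = (z * (starRingEnd ℂ) z).re := by
    intro z
    rw [Complex.mul_conj]
    simp [Complex.ofReal_re, Complex.normSq_eq_norm_sq]
    norm_cast
  -- coefficients
  set W : Fin N → Fin N → ℝ := fun j k => (a j * (starRingEnd ℂ) (a k)).re with hW
  set V : Fin N → Fin N → ℝ := fun j k => (a j * (starRingEnd ℂ) (a k)).im with hV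
  set n : Fin N → Fin N → ℤ := fun j k => l j - l k with hn
  -- the real-valued expansion of each product term
  set G : Fin N → Fin N → ℝ → ℝ := fun j k θ =>
    W j k * Real.cos ((n j k : ℝ)*θ) - V j k * Real.sin ((n j k : ℝ)*θ) with hG
  have hGcont : ∀ j k, Continuous (G j k) := by
    intro j k
    simp only [hG]
    fun_prop
  have hGint : ∀ j k, (∫ θ in (0:ℝ)..(2*Real.pi), G j k θ)
      = if l j = l k then 2*Real.pi * W j k else 0 := by
    intro j k
    have hc : IntervalIntegrable (fun θ => W j k * Real.cos ((n j k : ℝ)*θ))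
        MeasureTheory.volume 0 (2*Real.pi) := (by fun_prop : Continuous _).intervalIntegrable _ _
    have hsn : IntervalIntegrable (fun θ => V j k * Real.sin ((n j k : ℝ)*θ))
        MeasureTheory.volume 0 (2*Real.pi) := (by fun_prop : Continuous _).intervalIntegrable _ _
    simp only [hG]
    rw [intervalIntegral.integral_sub hc hsn, intervalIntegral.integral_const_mul,
      intervalIntegral.integral_const_mul, int_cos_int, int_sin_int]
    rcases eq_or_ne (l j) (l k) with h | h
    · have h0 : n j k = 0 := by simp [hn, sub_eq_zero, h]
      rw [if_pos h0, if_pos h]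
      ring
    · have h0 : n j k ≠ 0 := by simp only [hn]; exact sub_ne_zero.2 h
      rw [if_neg h0, if_neg h]
      ring
  have hpt : ∀ t θ : ℝ,
      ‖∑ k, a k * Complex.exp (Complex.I * (l k : ℂ) * (θ : ℂ)) *
          (Real.cos (μ k * t) : ℂ) / (Real.sqrt (2 * Real.pi) : ℂ)‖ ^ 2
      = ∑ j, ∑ k, G j k θ * (Real.cos (μ j * t) * Real.cos (μ k * t)) / (2*Real.pi) := by
    intro t θ
    rw [hnorm, map_sum, Finset.sum_mul_sum, Complex.re_sum]
    refine Finset.sum_congr rfl fun j _ => ?_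
    rw [Complex.re_sum]
    refine Finset.sum_congr rfl fun k _ => ?_
    rw [prod_term (a j) (a k) (l j) (l k) θ _ _ _ hs]
    simp only [hG, hW, hV, hn, Complex.div_ofReal_re, Complex.mul_re, Complex.ofReal_re,
      Complex.ofReal_im, Complex.exp_ofReal_mul_I_re, Complex.exp_ofReal_mul_I_im,
      mul_zero, zero_mul, sub_zero, add_zero]
    ring
  have hinner : ∀ t : ℝ,
      (∫ θ in (0:ℝ)..(2 * Real.pi),
        ‖∑ k, a k * Complex.exp (Complex.I * (l k : ℂ) * (θ : ℂ)) *
            (Real.cos (μ k * t) : ℂ) / (Real.sqrt (2 * Real.pi) : ℂ)‖ ^ 2)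
      = ∑ j, ∑ k, (if l j = l k then W j k else 0) *
          (Real.cos (μ j * t) * Real.cos (μ k * t)) := by
    intro t
    have hcontθ : ∀ j k, Continuous
        (fun θ => G j k θ * (Real.cos (μ j * t) * Real.cos (μ k * t)) / (2*Real.pi)) :=
      fun j k => ((hGcont j k).mul continuous_const).div_const _
    rw [intervalIntegral.integral_congr (fun θ _ => hpt t θ)]
    rw [intervalIntegral.integral_finset_sum (fun j _ =>
      (continuous_finset_sum _ (fun k _ => hcontθ j k)).intervalIntegrable _ _)]
    refine Finset.sum_congr rfl fun j _ => ?_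
    rw [intervalIntegral.integral_finset_sum (fun k _ => (hcontθ j k).intervalIntegrable _ _)]
    refine Finset.sum_congr rfl fun k _ => ?_
    rw [intervalIntegral.integral_div, intervalIntegral.integral_mul_const, hGint]
    rcases eq_or_ne (l j) (l k) with h | h
    · rw [if_pos h, if_pos h]
      field_simp
    · simp [h]
  have hcc : ∀ j k : Fin N, Continuous (fun t => Real.cos (μ j * t) * Real.cos (μ k * t)) := by
    intro j k; fun_prop
  have houter : ∀ A : ℝ, ((2/A) * ∫ t in (0:ℝ)..A, ∑ j, ∑ k,
        (if l j = l k then W j k else 0) * (Real.cos (μ j * t) * Real.cos (μ k * t)))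
      = ∑ j, ∑ k, (if l j = l k then W j k else 0) *
          ((2/A) * ∫ t in (0:ℝ)..A, Real.cos (μ j * t) * Real.cos (μ k * t)) := by
    intro A
    rw [intervalIntegral.integral_finset_sum (fun j _ =>
      (continuous_finset_sum _ (fun k _ => (show Continuous (fun t => (if l j = l k then W j k else 0) * (Real.cos (μ j * t) * Real.cos (μ k * t))) from continuous_const.mul (hcc j k)))).intervalIntegrable _ _),
      Finset.mul_sum]
    refine Finset.sum_congr rfl fun j _ => ?_
    rw [intervalIntegral.integral_finset_sum (fun k _ =>
      (show Continuous (fun t => (if l j = l k then W j k else 0) * (Real.cos (μ j * t) * Real.cos (μ k * t))) from continuous_const.mul (hcc j k)).intervalIntegrable _ _), Finset.mul_sum]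
    refine Finset.sum_congr rfl fun k _ => ?_
    rw [intervalIntegral.integral_const_mul]
    ring
  have hfinal : Tendsto (fun A : ℝ => ∑ j, ∑ k, (if l j = l k then W j k else 0) *
        ((2/A) * ∫ t in (0:ℝ)..A, Real.cos (μ j * t) * Real.cos (μ k * t)))
      atTop (nhds (∑ j, ∑ k, (if l j = l k then W j k else 0) *
        (if μ j = μ k then 1 else 0))) :=
    tendsto_finset_sum _ (fun j _ => tendsto_finset_sum _ (fun k _ =>
      (tendsto_cos_cos (hpos j) (hpos k)).const_mul _))
  have hval : (∑ j, ∑ k, (if l j = l k then W j k else 0) * (if μ j = μ k then 1 else 0))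
      = ∑ k, ‖a k‖ ^ 2 := by
    refine Finset.sum_congr rfl fun j _ => ?_
    rw [Finset.sum_eq_single j]
    · rw [if_pos rfl, if_pos rfl, mul_one]
      exact (hnorm (a j)).symm
    · intro k _ hkj
      by_cases h1 : l j = l k
      · by_cases h2 : μ j = μ k
        · exfalso
          exact hkj.symm (hinj (by simp [h1, h2]))
        · simp [h2]
      · simp [h1]
    · intro h
      exact absurd (Finset.mem_univ j) h
  rw [hval] at hfinal
  refine hfinal.congr fun A => ?_
  rw [← houter A]
  congr 1
  exact intervalIntegral.integral_congr fun t _ => (hinner t).symm
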